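/- Let d ≥ 1 be an integer, 0 < α ≤ 2, 0 < β < 1 with d < α(1+β)/β, and let p : ℝ^d → [0,∞) be measurable with ∫_{ℝ^d} p(x)^{1+β} dx < ∞. For t > 0 set p_t(x) := t^{-d/α} p(t^{-1/α} x). Then for every t > 0, ∫_0^t ∫_{ℝ^d} (∫_r^t p_{u-r}(x) du)^{1+β} dx dr < ∞. (This is the (1+β)-integrability of the kernel defining the stable process η¹.) -/

import Mathlib

open MeasureTheory Set Filter
open scoped ENNReal

/-- The rescaled family `p_t(x) := t^{-d/α} p(t^{-1/α} x)` of a self-similar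
transition density profile `p`. -/
noncomputable def pSelfSim (d : ℕ) (α : ℝ) (p : EuclideanSpace ℝ (Fin d) → ℝ)
    (t : ℝ) (x : EuclideanSpace ℝ (Fin d)) : ℝ :=
  t ^ (-((d : ℝ) / α)) * p ((t ^ (-(1 / α)) : ℝ) • x)

/-!
After the substitution `s = u - r` the inner integral runs over `(0, t - r] ⊆ (0, t]`, so the
integrand in `r` is bounded by `F = ∫ (∫_0^t p_s(x) ds)^(1+β) dx`. Self-similarity gives
`∫ p_s^(1+β) = s^(-dβ/α) ∫ p^(1+β)`, and Hölder's inequality in `s` against a power weight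
(a substitute for Minkowski's integral inequality) shows `F < ∞` as soon as `dβ/α < 1 + β`,
which is the dimension condition `d < α(1+β)/β`.
-/

open scoped Interval

lemma lintegral_Ioc_ofReal_rpow_lt_top {e : ℝ} (he : -1 < e) (t : ℝ) :
    ∫⁻ s in Ioc 0 t, ENNReal.ofReal (s ^ e) < ⊤ := by
  have hint : IntegrableOn (fun s : ℝ => s ^ e) (Ι 0 t) :=
    (intervalIntegral.intervalIntegrable_rpow' he).def'
  calc ∫⁻ s in Ioc 0 t, ENNReal.ofReal (s ^ e)
      ≤ ∫⁻ s in Ι 0 t, ‖s ^ e‖ₑ :=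
        (lintegral_mono_set Ioc_subset_uIoc).trans (lintegral_mono fun s => Real.ofReal_le_enorm _)
    _ < ⊤ := hint.hasFiniteIntegral

lemma setLIntegral_Ioc_comp_sub (f : ℝ → ℝ≥0∞) (r t : ℝ) :
    ∫⁻ u in Ioc r t, f (u - r) = ∫⁻ s in Ioc 0 (t - r), f s := by
  have h := (measurePreserving_sub_right volume r).setLIntegral_comp_preimage_emb
    (MeasurableEquiv.subRight r).measurableEmbedding f (Ioc 0 (t - r))
  rwa [preimage_sub_const_Ioc, zero_add, sub_add_cancel] at h

lemma ENNReal.lintegral_mul_rpow_le {X : Type*} [MeasurableSpace X] (μ : Measure X)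
    {p q : ℝ} (hpq : p.HolderConjugate q) {w g : X → ℝ≥0∞}
    (hw : AEMeasurable w μ) (hg : AEMeasurable g μ) :
    (∫⁻ x, w x * g x ∂μ) ^ q
      ≤ (∫⁻ x, w x ^ p ∂μ) ^ (q / p) * ∫⁻ x, g x ^ q ∂μ := by
  have hq : 0 < q := hpq.symm.pos
  calc (∫⁻ x, w x * g x ∂μ) ^ q
      ≤ ((∫⁻ x, w x ^ p ∂μ) ^ (1 / p) * (∫⁻ x, g x ^ q ∂μ) ^ (1 / q)) ^ q :=
        ENNReal.rpow_le_rpow (ENNReal.lintegral_mul_le_Lp_mul_Lq μ hpq hw hg) hq.le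
    _ = (∫⁻ x, w x ^ p ∂μ) ^ (q / p) * ∫⁻ x, g x ^ q ∂μ := by
      rw [ENNReal.mul_rpow_of_nonneg _ _ hq.le, ← ENNReal.rpow_mul, ← ENNReal.rpow_mul,
        one_div_mul_cancel hq.ne', ENNReal.rpow_one, one_div_mul_eq_div]

lemma rpow_setLIntegral_Ioc_le_weighted {q : ℝ} (hq : 1 < q) (a t : ℝ) {f : ℝ → ℝ≥0∞}
    (hf : Measurable f) :
    (∫⁻ s in Ioc 0 t, f s) ^ q
      ≤ (∫⁻ s in Ioc 0 t, ENNReal.ofReal (s ^ (a * q.conjExponent))) ^ (q / q.conjExponent)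
        * ∫⁻ s in Ioc 0 t, ENNReal.ofReal (s ^ (-(a * q))) * f s ^ q := by
  have hpq := (Real.HolderConjugate.conjExponent hq).symm
  have hq0 : 0 ≤ q := by linarith
  calc (∫⁻ s in Ioc 0 t, f s) ^ q
      = (∫⁻ s in Ioc 0 t, ENNReal.ofReal (s ^ a) * (ENNReal.ofReal (s ^ (-a)) * f s)) ^ q := by
        congr 1
        refine setLIntegral_congr_fun measurableSet_Ioc fun s hs => ?_
        rw [← mul_assoc, ← ENNReal.ofReal_mul (Real.rpow_nonneg hs.1.le _),
          ← Real.rpow_add hs.1, add_neg_cancel, Real.rpow_zero, ENNReal.ofReal_one, one_mul]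
    _ ≤ (∫⁻ s in Ioc 0 t, ENNReal.ofReal (s ^ a) ^ q.conjExponent) ^ (q / q.conjExponent)
        * ∫⁻ s in Ioc 0 t, (ENNReal.ofReal (s ^ (-a)) * f s) ^ q :=
      ENNReal.lintegral_mul_rpow_le _ hpq (measurable_id.pow_const _).ennreal_ofReal.aemeasurable
        ((measurable_id.pow_const _).ennreal_ofReal.mul hf).aemeasurable
    _ = (∫⁻ s in Ioc 0 t, ENNReal.ofReal (s ^ (a * q.conjExponent))) ^ (q / q.conjExponent)
        * ∫⁻ s in Ioc 0 t, ENNReal.ofReal (s ^ (-(a * q))) * f s ^ q := by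
      congr 1
      · congr 1
        refine setLIntegral_congr_fun measurableSet_Ioc fun s hs => ?_
        rw [ENNReal.ofReal_rpow_of_nonneg (Real.rpow_nonneg hs.1.le _) hpq.nonneg,
          ← Real.rpow_mul hs.1.le]
      · refine setLIntegral_congr_fun measurableSet_Ioc fun s hs => ?_
        rw [ENNReal.mul_rpow_of_nonneg _ _ hq0,
          ENNReal.ofReal_rpow_of_nonneg (Real.rpow_nonneg hs.1.le _) hq0, ← Real.rpow_mul hs.1.le,
          neg_mul]

lemma lintegral_rpow_setLIntegral_Ioc_lt_top {X : Type*} [MeasurableSpace X] {μ : Measure X}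
    [SFinite μ] {k : ℝ → X → ℝ≥0∞} (hk : Measurable (Function.uncurry k)) {q γ : ℝ}
    (hq : 1 < q) (hγ : γ < q) {C : ℝ≥0∞} (hC : C ≠ ⊤) (t : ℝ)
    (hk_bound : ∀ s ∈ Ioc 0 t, ∫⁻ x, k s x ^ q ∂μ ≤ ENNReal.ofReal (s ^ (-γ)) * C) :
    ∫⁻ x, (∫⁻ s in Ioc 0 t, k s x) ^ q ∂μ < ⊤ := by
  set p := q.conjExponent
  -- the weight `s ^ a` is chosen so that both Hölder factors are integrable at `s = 0`
  set a := (2 - q - γ) / (2 * q)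
  have hq0 : 0 < q := by linarith
  have hwp : -1 < a * p := by
    have h : a * p = (2 - q - γ) / (2 * (q - 1)) := by
      simp only [a, p, Real.conjExponent]
      field_simp [sub_ne_zero_of_ne hq.ne']
    rw [h, lt_div_iff₀ (by linarith)]
    linarith
  have hgq : -1 < -(a * q) - γ := by
    have h : a * q = (2 - q - γ) / 2 := by
      simp only [a]
      field_simp
    rw [h]
    linarith
  set A := (∫⁻ s in Ioc 0 t, ENNReal.ofReal (s ^ (a * p))) ^ (q / p)
  have hA : A ≠ ⊤ := ENNReal.rpow_ne_top_of_nonneg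
    (div_nonneg hq0.le (Real.HolderConjugate.conjExponent hq).symm.nonneg)
    (lintegral_Ioc_ofReal_rpow_lt_top hwp t).ne
  calc ∫⁻ x, (∫⁻ s in Ioc 0 t, k s x) ^ q ∂μ
      ≤ ∫⁻ x, A * (∫⁻ s in Ioc 0 t, ENNReal.ofReal (s ^ (-(a * q))) * k s x ^ q) ∂μ :=
        lintegral_mono fun x => rpow_setLIntegral_Ioc_le_weighted hq a t
          (hk.comp (measurable_id.prodMk measurable_const))
    _ = A * ∫⁻ s in Ioc 0 t, ENNReal.ofReal (s ^ (-(a * q))) * ∫⁻ x, k s x ^ q ∂μ := by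
      rw [lintegral_const_mul' _ _ hA, lintegral_lintegral_swap
        (f := fun x s => ENNReal.ofReal (s ^ (-(a * q))) * k s x ^ q)
        (((measurable_fst.pow_const _).ennreal_ofReal.mul (hk.pow_const q)).comp
          measurable_swap).aemeasurable]
      simp_rw [lintegral_const_mul' _ _ ENNReal.ofReal_ne_top]
    _ ≤ A * ∫⁻ s in Ioc 0 t,
          ENNReal.ofReal (s ^ (-(a * q))) * (ENNReal.ofReal (s ^ (-γ)) * C) := by
      gcongr A * ?_
      exact setLIntegral_mono' measurableSet_Ioc fun s hs => by gcongr; exact hk_bound s hs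
    _ = A * ((∫⁻ s in Ioc 0 t, ENNReal.ofReal (s ^ (-(a * q) - γ))) * C) := by
      rw [← lintegral_mul_const' _ _ hC]
      congr 1
      refine setLIntegral_congr_fun measurableSet_Ioc fun s hs => ?_
      rw [← mul_assoc, ← ENNReal.ofReal_mul (Real.rpow_nonneg hs.1.le _),
        ← Real.rpow_add hs.1, sub_eq_add_neg]
    _ < ⊤ := ENNReal.mul_lt_top hA.lt_top
      (ENNReal.mul_lt_top (lintegral_Ioc_ofReal_rpow_lt_top hgq t) hC.lt_top)

lemma lintegral_ofReal_pSelfSim_rpow {d : ℕ} (α : ℝ) {p : EuclideanSpace ℝ (Fin d) → ℝ}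
    (hp0 : ∀ x, 0 ≤ p x) {q : ℝ} (hq : 0 ≤ q) {s : ℝ} (hs : 0 < s) :
    ∫⁻ x, ENNReal.ofReal (pSelfSim d α p s x) ^ q
      = ENNReal.ofReal (s ^ (-(d / α * (q - 1)))) * ∫⁻ x, ENNReal.ofReal (p x ^ q) := by
  set c : ℝ := s ^ (-(1 / α)) with hc
  have hc0 : 0 < c := Real.rpow_pos_of_pos hs _
  have hpointwise : ∀ x, ENNReal.ofReal (pSelfSim d α p s x) ^ q
      = ENNReal.ofReal (s ^ (-(d / α) * q)) * ENNReal.ofReal (p (c • x) ^ q) := fun x => by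
    rw [pSelfSim, ENNReal.ofReal_mul (Real.rpow_nonneg hs.le _), ENNReal.mul_rpow_of_nonneg _ _ hq,
      ENNReal.ofReal_rpow_of_nonneg (Real.rpow_nonneg hs.le _) hq,
      ENNReal.ofReal_rpow_of_nonneg (hp0 _) hq, ← Real.rpow_mul hs.le]
  have hchange : ∫⁻ x, ENNReal.ofReal (p (c • x) ^ q)
      = ENNReal.ofReal ((c ^ d)⁻¹) * ∫⁻ y, ENNReal.ofReal (p y ^ q) := by
    have h := lintegral_map_equiv (fun y => ENNReal.ofReal (p y ^ q))
      (MeasurableEquiv.smul₀ c hc0.ne') (μ := volume)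
    rw [MeasurableEquiv.coe_smul₀, Measure.map_addHaar_smul _ hc0.ne'] at h
    rw [← h, lintegral_smul_measure,
      finrank_euclideanSpace_fin, abs_of_pos (by positivity), smul_eq_mul]
  simp_rw [hpointwise]
  rw [lintegral_const_mul' _ _ ENNReal.ofReal_ne_top, hchange, ← mul_assoc,
    ← ENNReal.ofReal_mul (Real.rpow_nonneg hs.le _), ← Real.rpow_natCast,
    ← Real.rpow_neg hc0.le, hc, ← Real.rpow_mul hs.le, ← Real.rpow_add hs]
  congr 3
  ring

lemma measurable_uncurry_pSelfSim {d : ℕ} (α : ℝ) {p : EuclideanSpace ℝ (Fin d) → ℝ}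
    (hpm : Measurable p) : Measurable (Function.uncurry (pSelfSim d α p)) :=
  (measurable_fst.pow_const _).mul (hpm.comp ((measurable_fst.pow_const _).smul measurable_snd))

theorem stmt_12_general (d : ℕ) (α β : ℝ) (hα0 : 0 < α)
    (hβ0 : 0 < β) (hdim : (d : ℝ) < α * (1 + β) / β)
    (p : EuclideanSpace ℝ (Fin d) → ℝ) (hpm : Measurable p) (hp0 : ∀ x, 0 ≤ p x)
    (hpint : ∫⁻ x, ENNReal.ofReal (p x ^ (1 + β)) < ⊤)
    (t : ℝ) :
    ∫⁻ r in Ioc (0 : ℝ) t,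
      ∫⁻ x, (∫⁻ u in Ioc r t, ENNReal.ofReal (pSelfSim d α p (u - r) x)) ^ (1 + β) < ⊤ := by
  set F := ∫⁻ x, (∫⁻ s in Ioc 0 t, ENNReal.ofReal (pSelfSim d α p s x)) ^ (1 + β)
  have hγ : d / α * β < 1 + β := by
    rw [div_mul_eq_mul_div, div_lt_iff₀ hα0, mul_comm _ α]
    exact (lt_div_iff₀ hβ0).mp hdim
  have hF : F < ⊤ :=
    lintegral_rpow_setLIntegral_Ioc_lt_top (measurable_uncurry_pSelfSim α hpm).ennreal_ofReal
      (by linarith) hγ hpint.ne t fun s hs => by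
        rw [lintegral_ofReal_pSelfSim_rpow α hp0 (by linarith) hs.1, add_sub_cancel_left]
  have hF_ge : ∀ r ∈ Ioc 0 t, ∫⁻ x,
      (∫⁻ u in Ioc r t, ENNReal.ofReal (pSelfSim d α p (u - r) x)) ^ (1 + β) ≤ F :=
    fun r hr => lintegral_mono fun x => by
      rw [setLIntegral_Ioc_comp_sub (fun s => ENNReal.ofReal (pSelfSim d α p s x))]
      gcongr
      exact sub_le_self t hr.1.le
  calc _ ≤ ∫⁻ _ in Ioc 0 t, F := setLIntegral_mono measurable_const hF_ge
    _ = F * volume (Ioc 0 t) := setLIntegral_const _ _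
    _ < ⊤ := ENNReal.mul_lt_top hF measure_Ioc_lt_top

theorem stmt_12 (d : ℕ) (hd : 1 ≤ d) (α β : ℝ) (hα0 : 0 < α) (hα2 : α ≤ 2)
    (hβ0 : 0 < β) (hβ1 : β < 1) (hdim : (d : ℝ) < α * (1 + β) / β)
    (p : EuclideanSpace ℝ (Fin d) → ℝ) (hpm : Measurable p) (hp0 : ∀ x, 0 ≤ p x)
    (hpint : ∫⁻ x, ENNReal.ofReal (p x ^ (1 + β)) < ⊤)
    (t : ℝ) (ht : 0 < t) :
    ∫⁻ r in Ioc (0 : ℝ) t,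
      ∫⁻ x, (∫⁻ u in Ioc r t, ENNReal.ofReal (pSelfSim d α p (u - r) x)) ^ (1 + β) < ⊤ :=
  stmt_12_general d α β hα0 hβ0 hdim p hpm hp0 hpint t
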